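/- arXiv:2010.14760 — 2 statements merged into one kernel-verified Lean document; each statement's English description precedes it below -/
import Mathlib

section
/- Let ψ: ℝ_+ → ℝ_+ be non-increasing with tψ(t) < 1 for large t, and define Ψ(t) = tψ(t)/(1 − tψ(t)). If x ∈ [0,1) is irrational and a_{n+1}(x) a_n(x) > Ψ(q_n(x)) for infinitely many n, then x is ψ-Dirichlet non-improvable, i.e. it is not the case that for all sufficiently large t the system |qx − p| < ψ(t), |q| < t has a nontrivial integer solution. -/
/-!
Take `n` with `aₙ₊₁aₙ > Ψ(qₙ)` and `qₙ` large, and look at the system for `t = qₙ`. By Lagrange's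
best approximation property every nontrivial `(p, q)` with `|q| < qₙ` has
`|qx - p| ≥ |qₙ₋₁x - pₙ₋₁| = 1 / (qₙ + qₙ₋₁ Tⁿx)`. Since `aₙ₊₁ Tⁿx ≤ 1` and `aₙ qₙ₋₁ ≤ qₙ`, the
hypothesis `aₙ₊₁aₙ > Ψ(qₙ)` gives `ψ(qₙ) (qₙ + qₙ₋₁ Tⁿx) < 1`, so the system has no solution.
-/

/-- The Gauss map `T(0) = 0`, `T(x) = 1/x (mod 1)`. -/
noncomputable def gaussT (x : ℝ) : ℝ := if x = 0 then 0 else Int.fract x⁻¹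

/-- The `n`-th continued fraction partial quotient of `x`, `aₙ(x) = ⌊1/T^(n-1)(x)⌋` (for `n ≥ 1`). -/
noncomputable def cfA (x : ℝ) (n : ℕ) : ℤ := ⌊(gaussT^[n - 1] x)⁻¹⌋

/-- The numerators `pₙ` of the continued fraction convergents of `x`. -/
noncomputable def cfP (x : ℝ) : ℕ → ℤ
  | 0 => 0
  | 1 => 1
  | n + 2 => cfA x (n + 2) * cfP x (n + 1) + cfP x n

/-- The denominators `qₙ` of the continued fraction convergents of `x`. -/
noncomputable def cfQ (x : ℝ) : ℕ → ℤ
  | 0 => 1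
  | 1 => cfA x 1
  | n + 2 => cfA x (n + 2) * cfQ x (n + 1) + cfQ x n

/-- `x` is `ψ`-Dirichlet improvable: there exists `N` such that for all `t > N`,
the system `|qx − p| < ψ(t)`, `|q| < t` has a nontrivial integer solution. -/
def DirichletImprovable (ψ : ℝ → ℝ) (x : ℝ) : Prop :=
  ∃ N : ℝ, ∀ t > N, ∃ p q : ℤ, ¬(p = 0 ∧ q = 0) ∧ |(q : ℝ) * x - (p : ℝ)| < ψ t ∧ |(q : ℝ)| < t

lemma Int.exists_eq_mul_add_mul_of_isUnit {a b c d : ℤ} (h : IsUnit (a * d - b * c)) (q p : ℤ) :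
    ∃ u v : ℤ, q = u * a + v * c ∧ p = u * b + v * d := by
  have he : (a * d - b * c) * (a * d - b * c) = 1 := by
    rcases Int.isUnit_iff.1 h with h | h <;> rw [h] <;> norm_num
  exact ⟨(a * d - b * c) * (q * d - p * c), (a * d - b * c) * (p * a - q * b),
    by linear_combination -q * he, by linear_combination -p * he⟩

lemma Int.mul_nonpos_of_abs_mul_add_mul_lt {u v a c : ℤ} (ha : 0 < a) (h : |u * a + v * c| < c) :
    u * v ≤ 0 := by
  by_contra! huv
  have hc : 0 < c := (abs_nonneg _).trans_lt h
  rcases abs_lt.1 h with ⟨h₁, h₂⟩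
  rcases lt_or_gt_of_ne (left_ne_zero_of_mul huv.ne') with hu | hu
  · have hv : v < 0 := neg_of_mul_pos_right huv hu.le
    nlinarith
  · have hv : 0 < v := pos_of_mul_pos_right huv hu.le
    nlinarith

lemma abs_le_abs_add_of_mul_nonneg {α : Type*} [CommRing α] [LinearOrder α] [IsStrictOrderedRing α]
    {a b : α} (h : 0 ≤ a * b) : |a| ≤ |a + b| :=
  sq_le_sq.1 (by nlinarith [sq_nonneg b])

lemma irrational_gaussT {y : ℝ} (hy : Irrational y) : Irrational (gaussT y) := by
  rw [gaussT, if_neg hy.ne_zero, Int.fract]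
  exact hy.inv.sub_intCast _

lemma gaussT_mem_Ico (y : ℝ) : gaussT y ∈ Set.Ico 0 1 := by
  unfold gaussT
  split_ifs
  exacts [⟨le_rfl, zero_lt_one⟩, ⟨Int.fract_nonneg _, Int.fract_lt_one _⟩]

section ContinuedFraction

variable {x : ℝ}

lemma irrational_gaussT_iterate (hirr : Irrational x) (n : ℕ) : Irrational (gaussT^[n] x) :=
  Function.Iterate.rec Irrational hirr (fun _ ↦ irrational_gaussT) n

lemma gaussT_iterate_mem_Ioo (hirr : Irrational x) (hx : x ∈ Set.Ico 0 1) :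
    ∀ n, gaussT^[n] x ∈ Set.Ioo 0 1
  | 0 => ⟨hx.1.lt_of_ne' hirr.ne_zero, hx.2⟩
  | n + 1 => by
    rw [Function.iterate_succ_apply']
    have hT := gaussT_mem_Ico (gaussT^[n] x)
    exact ⟨hT.1.lt_of_ne' (irrational_gaussT (irrational_gaussT_iterate hirr n)).ne_zero, hT.2⟩

lemma gaussT_iterate_succ (hirr : Irrational x) (n : ℕ) :
    gaussT^[n + 1] x = (gaussT^[n] x)⁻¹ - cfA x (n + 1) := by
  rw [Function.iterate_succ_apply', gaussT, if_neg (irrational_gaussT_iterate hirr n).ne_zero]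
  rfl

lemma gaussT_iterate_mul_cfA_add (hirr : Irrational x) (n : ℕ) :
    gaussT^[n] x * (cfA x (n + 1) + gaussT^[n + 1] x) = 1 := by
  rw [gaussT_iterate_succ hirr, add_sub_cancel,
    mul_inv_cancel₀ (irrational_gaussT_iterate hirr n).ne_zero]

lemma cfA_succ_le_inv (n : ℕ) : (cfA x (n + 1) : ℝ) ≤ (gaussT^[n] x)⁻¹ :=
  Int.floor_le _

lemma one_le_cfA (hirr : Irrational x) (hx : x ∈ Set.Ico 0 1) (n : ℕ) : 1 ≤ cfA x (n + 1) := by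
  obtain ⟨h₀, h₁⟩ := gaussT_iterate_mem_Ioo hirr hx n
  exact Int.le_floor.2 (by exact_mod_cast one_le_inv_iff₀.2 ⟨h₀, h₁.le⟩)

lemma one_le_cfQ (hirr : Irrational x) (hx : x ∈ Set.Ico 0 1) (n : ℕ) : 1 ≤ cfQ x n := by
  induction n using Nat.twoStepInduction with
  | zero => exact le_rfl
  | one => exact one_le_cfA hirr hx 0
  | more n h₀ h₁ =>
    have ha := one_le_cfA hirr hx (n + 1)
    rw [cfQ]
    nlinarith

lemma cfA_mul_cfQ_le_cfQ_succ (hirr : Irrational x) (hx : x ∈ Set.Ico 0 1) :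
    ∀ n, cfA x (n + 1) * cfQ x n ≤ cfQ x (n + 1)
  | 0 => by simp [cfQ]
  | n + 1 => by
    rw [cfQ]
    linarith [one_le_cfQ hirr hx n]

lemma le_cfQ (hirr : Irrational x) (hx : x ∈ Set.Ico 0 1) (n : ℕ) : (n : ℤ) ≤ cfQ x n := by
  induction n using Nat.twoStepInduction with
  | zero => simp [cfQ]
  | one => exact one_le_cfA hirr hx 0
  | more n _ h₁ =>
    have hq := cfA_mul_cfQ_le_cfQ_succ hirr hx (n + 1)
    have ha := one_le_cfA hirr hx (n + 1)
    rw [cfQ]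
    push_cast at h₁ ⊢
    nlinarith [one_le_cfQ hirr hx n]

lemma cfQ_mul_cfP_succ_sub (n : ℕ) :
    cfQ x n * cfP x (n + 1) - cfP x n * cfQ x (n + 1) = (-1) ^ n := by
  induction n with
  | zero => simp [cfP, cfQ]
  | succ n ih =>
    rw [cfP, cfQ, pow_succ]
    linear_combination (-1 : ℤ) * ih

lemma cfQ_add_mul_gaussT_mul (hirr : Irrational x) (n : ℕ) :
    ((cfQ x (n + 1) : ℝ) + cfQ x n * gaussT^[n + 1] x) * x
      = cfP x (n + 1) + cfP x n * gaussT^[n + 1] x := by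
  induction n with
  | zero =>
    have h := gaussT_iterate_mul_cfA_add hirr 0
    rw [Function.iterate_zero_apply] at h
    simp only [cfQ, cfP, Int.cast_one, Int.cast_zero, one_mul, zero_mul, add_zero]
    linear_combination h
  | succ n ih =>
    rw [cfQ, cfP]
    push_cast
    linear_combination (cfA x (n + 2) + gaussT^[n + 2] x) * ih
      - (cfQ x n * x - cfP x n) * gaussT_iterate_mul_cfA_add hirr (n + 1)

lemma cfQ_mul_sub_cfP_mul (hirr : Irrational x) (n : ℕ) :
    (cfQ x n * x - cfP x n) * ((cfQ x (n + 1) : ℝ) + cfQ x n * gaussT^[n + 1] x) = (-1) ^ n := by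
  have hdet : (cfQ x n * cfP x (n + 1) - cfP x n * cfQ x (n + 1) : ℝ) = (-1) ^ n := by
    exact_mod_cast cfQ_mul_cfP_succ_sub n
  linear_combination cfQ x n * cfQ_add_mul_gaussT_mul hirr n + hdet

lemma cfQ_add_mul_gaussT_pos (hirr : Irrational x) (hx : x ∈ Set.Ico 0 1) (n : ℕ) :
    0 < (cfQ x (n + 1) : ℝ) + cfQ x n * gaussT^[n + 1] x := by
  have h₀ : (1 : ℝ) ≤ cfQ x n := by exact_mod_cast one_le_cfQ hirr hx n
  have h₁ : (1 : ℝ) ≤ cfQ x (n + 1) := by exact_mod_cast one_le_cfQ hirr hx (n + 1)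
  nlinarith [(gaussT_iterate_mem_Ioo hirr hx (n + 1)).1]

lemma abs_cfQ_mul_sub_cfP_mul (hirr : Irrational x) (hx : x ∈ Set.Ico 0 1) (n : ℕ) :
    |cfQ x n * x - cfP x n| * ((cfQ x (n + 1) : ℝ) + cfQ x n * gaussT^[n + 1] x) = 1 := by
  rw [← abs_of_pos (cfQ_add_mul_gaussT_pos hirr hx n), ← abs_mul, cfQ_mul_sub_cfP_mul hirr n,
    abs_pow, abs_neg, abs_one, one_pow]

lemma cfQ_mul_sub_cfP_mul_succ_neg (hirr : Irrational x) (hx : x ∈ Set.Ico 0 1) (n : ℕ) :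
    (cfQ x n * x - cfP x n) * (cfQ x (n + 1) * x - cfP x (n + 1)) < 0 := by
  have hsign : ((-1 : ℝ) ^ n) * (-1) ^ (n + 1) = -1 := by
    rw [← pow_add, show n + (n + 1) = 2 * n + 1 by ring, pow_succ, pow_mul]
    norm_num
  have h : ((cfQ x n * x - cfP x n) * (cfQ x (n + 1) * x - cfP x (n + 1)))
      * (((cfQ x (n + 1) : ℝ) + cfQ x n * gaussT^[n + 1] x)
        * ((cfQ x (n + 2) : ℝ) + cfQ x (n + 1) * gaussT^[n + 2] x)) < 0 := by
    linear_combination (((cfQ x (n + 1) : ℝ) * x - cfP x (n + 1))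
        * ((cfQ x (n + 2) : ℝ) + cfQ x (n + 1) * gaussT^[n + 2] x)) * cfQ_mul_sub_cfP_mul hirr n
      + (-1 : ℝ) ^ n * cfQ_mul_sub_cfP_mul hirr (n + 1) + hsign
  exact neg_of_mul_neg_left h
    (mul_pos (cfQ_add_mul_gaussT_pos hirr hx n) (cfQ_add_mul_gaussT_pos hirr hx (n + 1))).le

lemma abs_cfQ_mul_sub_cfP_le (hirr : Irrational x) (hx : x ∈ Set.Ico 0 1) {m : ℕ} {p q : ℤ}
    (hpq : ¬(p = 0 ∧ q = 0)) (hq : |q| < cfQ x (m + 1)) :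
    |cfQ x m * x - cfP x m| ≤ |q * x - p| := by
  have hdet : IsUnit (cfQ x m * cfP x (m + 1) - cfP x m * cfQ x (m + 1)) := by
    rw [cfQ_mul_cfP_succ_sub]
    exact isUnit_neg_one.pow m
  -- Write `(q, p) = u (qₘ, pₘ) + v (qₘ₊₁, pₘ₊₁)`; then `u ≠ 0` and `uv ≤ 0`, and since consecutive
  -- errors have opposite signs, the two error terms cannot cancel.
  obtain ⟨u, v, rfl, rfl⟩ := Int.exists_eq_mul_add_mul_of_isUnit hdet q p
  have huv : u * v ≤ 0 := Int.mul_nonpos_of_abs_mul_add_mul_lt (one_le_cfQ hirr hx m) hq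
  have hu : u ≠ 0 := by
    rintro rfl
    have hc : 0 < cfQ x (m + 1) := one_le_cfQ hirr hx (m + 1)
    have hv : v = 0 := by
      rw [zero_mul, zero_add, abs_mul, abs_of_pos hc] at hq
      exact Int.abs_lt_one_iff.1 <| by nlinarith
    simp [hv] at hpq
  have hE : 0 ≤ (u * (cfQ x m * x - cfP x m)) * (v * (cfQ x (m + 1) * x - cfP x (m + 1))) := by
    have := cfQ_mul_sub_cfP_mul_succ_neg hirr hx m
    have huv' : (u * v : ℝ) ≤ 0 := by exact_mod_cast huv
    nlinarith
  calc |cfQ x m * x - cfP x m|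
      ≤ |(u : ℝ)| * |cfQ x m * x - cfP x m| :=
        le_mul_of_one_le_left (abs_nonneg _) (by exact_mod_cast Int.one_le_abs hu)
    _ = |u * (cfQ x m * x - cfP x m)| := (abs_mul _ _).symm
    _ ≤ |u * (cfQ x m * x - cfP x m) + v * (cfQ x (m + 1) * x - cfP x (m + 1))| :=
        abs_le_abs_add_of_mul_nonneg hE
    _ = |((u * cfQ x m + v * cfQ x (m + 1) : ℤ) : ℝ) * x
          - (u * cfP x m + v * cfP x (m + 1) : ℤ)| := by
        push_cast; ring_nf

lemma lt_abs_cfQ_mul_sub_cfP (hirr : Irrational x) (hx : x ∈ Set.Ico 0 1) {m : ℕ} {y : ℝ}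
    (hy : cfQ x (m + 1) * y < 1)
    (h : ((cfA x (m + 2) * cfA x (m + 1) : ℤ) : ℝ)
      > cfQ x (m + 1) * y / (1 - cfQ x (m + 1) * y)) :
    y < |cfQ x m * x - cfP x m| := by
  have hQ : (0 : ℝ) < cfQ x (m + 1) := by exact_mod_cast one_le_cfQ hirr hx (m + 1)
  have ha₁ : (cfA x (m + 1) * cfQ x m : ℝ) ≤ cfQ x (m + 1) := by
    exact_mod_cast cfA_mul_cfQ_le_cfQ_succ hirr hx m
  have ha₁q : (0 : ℝ) ≤ cfA x (m + 1) * cfQ x m := by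
    exact_mod_cast (mul_pos (one_le_cfA hirr hx m) (one_le_cfQ hirr hx m)).le
  set Q : ℝ := (cfQ x (m + 1) : ℝ)
  set ξ := gaussT^[m + 1] x
  have hξ : 0 < ξ := (gaussT_iterate_mem_Ioo hirr hx (m + 1)).1
  have hqξ : 0 < cfQ x m * ξ := mul_pos (by exact_mod_cast one_le_cfQ hirr hx m) hξ
  have ha₂ : cfA x (m + 2) * ξ ≤ 1 :=
    (mul_le_mul_of_nonneg_right (cfA_succ_le_inv (m + 1)) hξ.le).trans_eq
      (inv_mul_cancel₀ hξ.ne')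
  rw [gt_iff_lt, div_lt_iff₀ (sub_pos.2 hy)] at h
  push_cast at h
  have hyD : Q * (y * (Q + cfQ x m * ξ)) < Q * 1 := calc
    Q * (y * (Q + cfQ x m * ξ)) = Q * y * Q + Q * y * (cfQ x m * ξ) := by ring
    _ < Q * y * Q + cfA x (m + 2) * cfA x (m + 1) * (1 - Q * y) * (cfQ x m * ξ) := by gcongr
    _ = Q * y * Q + (cfA x (m + 2) * ξ) * (cfA x (m + 1) * cfQ x m) * (1 - Q * y) := by ring
    _ ≤ Q * y * Q + 1 * Q * (1 - Q * y) := by gcongr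
    _ = Q * 1 := by ring
  exact lt_of_mul_lt_mul_right
    ((lt_of_mul_lt_mul_left hyD hQ.le).trans_eq (abs_cfQ_mul_sub_cfP_mul hirr hx m).symm)
    (cfQ_add_mul_gaussT_pos hirr hx m).le

end ContinuedFraction

theorem dirichlet_non_improvable_general (ψ : ℝ → ℝ)
    (hsmall : ∃ T : ℝ, ∀ t ≥ T, t * ψ t < 1)
    (x : ℝ) (hx : x ∈ Set.Ico (0 : ℝ) 1) (hirr : Irrational x)
    (h : {n : ℕ | 1 ≤ n ∧
        ((cfA x (n + 1) * cfA x n : ℤ) : ℝ) >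
          (cfQ x n : ℝ) * ψ (cfQ x n) / (1 - (cfQ x n : ℝ) * ψ (cfQ x n))}.Infinite) :
    ¬ DirichletImprovable ψ x := by
  rintro ⟨N, hN⟩
  obtain ⟨T, hT⟩ := hsmall
  obtain ⟨n, ⟨hn₁, hn⟩, hlarge⟩ := h.exists_gt ⌈max N T⌉₊
  obtain ⟨m, rfl⟩ := Nat.exists_eq_add_of_le' hn₁
  have hQ : max N T < cfQ x (m + 1) := calc
    max N T ≤ ⌈max N T⌉₊ := Nat.le_ceil _
    _ < (m + 1 : ℕ) := by exact_mod_cast hlarge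
    _ ≤ cfQ x (m + 1) := by exact_mod_cast le_cfQ hirr hx (m + 1)
  obtain ⟨p, q, hpq, happrox, hq⟩ := hN _ ((le_max_left N T).trans_lt hQ)
  have hlower := lt_abs_cfQ_mul_sub_cfP hirr hx (hT _ ((le_max_right N T).trans hQ.le)) hn
  have hbest := abs_cfQ_mul_sub_cfP_le hirr hx hpq (by exact_mod_cast hq)
  linarith

/-- Kleinbock–Wadleigh criterion (non-improvable direction): if `ψ` is non-increasing with
`tψ(t) < 1` for large `t`, `Ψ(t) = tψ(t)/(1 − tψ(t))`, `x ∈ [0,1)` is irrational and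
`aₙ₊₁(x)aₙ(x) > Ψ(qₙ(x))` for infinitely many `n`, then `x` is `ψ`-Dirichlet non-improvable. -/
theorem dirichlet_non_improvable (ψ : ℝ → ℝ) (hψpos : ∀ t > (0 : ℝ), 0 < ψ t)
    (hψmono : ∀ s t : ℝ, 0 < s → s ≤ t → ψ t ≤ ψ s)
    (hsmall : ∃ T : ℝ, ∀ t ≥ T, t * ψ t < 1)
    (x : ℝ) (hx : x ∈ Set.Ico (0 : ℝ) 1) (hirr : Irrational x)
    (h : {n : ℕ | 1 ≤ n ∧
        ((cfA x (n + 1) * cfA x n : ℤ) : ℝ) >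
          (cfQ x n : ℝ) * ψ (cfQ x n) / (1 - (cfQ x n : ℝ) * ψ (cfQ x n))}.Infinite) :
    ¬ DirichletImprovable ψ x :=
  dirichlet_non_improvable_general ψ hsmall x hx hirr h
end

section
/- If Ψ: ℕ → ℝ_+ satisfies Ψ(Q^x) ≍ Ψ(Q) for all x > 0 (with implied constants depending only on x), then for f a dimension function, the double series ∑_{k≥1} ∑_{1≤j<log₂Ψ(2^k)} 2^{2k+j} f(2^{-(2k+j)}/Ψ(2^{k+j/2})) converges if and only if ∑_{k≥1} ∑_{1≤j<log₂Ψ(2^k)} 2^{2k+j} f(2^{-(2k+j)}/Ψ(2^{k+j})) converges. -/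
/-!
The second series is termwise at most the first, since `Ψ (2 ^ (k + j / 2)) ≤ Ψ (2 ^ (k + j))`.
Conversely `Ψ (2 ^ (k + j)) ≤ Ψ (2 ^ (2k + j)) ≤ c Ψ (2 ^ (k + j / 2))`, and with `c < 2 ^ m`
the constant is absorbed by raising the exponent `2k + j` of a summand `2 ^ e f (2 ^ (-e) / t)`
by `2m`: the `(k + m, j)` and the `(k, j + 2m)` terms of the first series are at most `4 ^ m`
times the `(k, j)` term of the second. The `j`-range of block `k + m` is covered by that of
block `k` together with the `2m`-shifted `j`-range of block `k + m` as soon as the monotone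
index bound `N k = ⌈log₂ Ψ (2 ^ (k + 1))⌉`, truncated at `2m + 1`, has become constant.
-/

open Finset Filter

theorem Monotone.eventually_min_add_le {N : ℕ → ℕ} (hN : Monotone N) (p b : ℕ) :
    ∀ᶠ k in atTop, min (N (k + p)) b ≤ N k := by
  have hM : Monotone fun k => min (N k) b := fun k l h => min_le_min_right b (hN h)
  have hbdd : BddAbove (Set.range fun k => min (N k) b) :=
    ⟨b, by rintro _ ⟨k, rfl⟩; exact min_le_right _ _⟩
  have hlim := tendsto_atTop_ciSup hM hbdd
  rw [nhds_discrete, tendsto_pure] at hlim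
  filter_upwards [hlim] with k hk
  calc min (N (k + p)) b ≤ ⨆ i, min (N i) b := le_ciSup hbdd (k + p)
    _ = min (N k) b := hk.symm
    _ ≤ N k := min_le_left _ _

theorem summable_sum_Ico_of_shift_le {N : ℕ → ℕ} (hN : Monotone N) {a b : ℕ → ℕ → ℝ}
    (ha : ∀ k j, 0 ≤ a k j) {p q : ℕ} {C : ℝ}
    (hp : ∀ k j, a (k + p) j ≤ C * b k j) (hq : ∀ k j, a k (j + q) ≤ C * b k j)
    (hb : Summable fun k => ∑ j ∈ Ico 1 (N k), b k j) :
    Summable fun k => ∑ j ∈ Ico 1 (N k), a k j := by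
  set B := fun k => ∑ j ∈ Ico 1 (N k), b k j
  have hkey : ∀ᶠ k in atTop,
      ‖∑ j ∈ Ico 1 (N (k + p)), a (k + p) j‖ ≤ C * B k + C * B (k + p) := by
    filter_upwards [hN.eventually_min_add_le p (q + 1)] with k hk
    set s := Ico 1 (N k)
    set t := Ico (1 + q) (N (k + p) + q)
    have hsub : Ico 1 (N (k + p)) ⊆ s ∪ t := by
      intro j hj
      simp only [s, t, mem_union, mem_Ico] at hj ⊢
      omega
    have hinter : 0 ≤ ∑ j ∈ s ∩ t, a (k + p) j := sum_nonneg fun j _ => ha _ j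
    rw [Real.norm_of_nonneg (sum_nonneg fun j _ => ha _ j)]
    calc ∑ j ∈ Ico 1 (N (k + p)), a (k + p) j ≤ ∑ j ∈ s ∪ t, a (k + p) j :=
          sum_le_sum_of_subset_of_nonneg hsub fun j _ _ => ha _ j
      _ ≤ ∑ j ∈ s, a (k + p) j + ∑ j ∈ t, a (k + p) j := by
          rw [← sum_union_inter]; exact le_add_of_nonneg_right hinter
      _ = ∑ j ∈ s, a (k + p) j + ∑ j ∈ Ico 1 (N (k + p)), a (k + p) (j + q) := by
          rw [sum_Ico_add']
      _ ≤ ∑ j ∈ s, C * b k j + ∑ j ∈ Ico 1 (N (k + p)), C * b (k + p) j :=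
          add_le_add (sum_le_sum fun j _ => hp k j) (sum_le_sum fun j _ => hq _ j)
      _ = C * B k + C * B (k + p) := by simp only [B, s, mul_sum]
  have hbound : Summable fun k => C * B k + C * B (k + p) :=
    (hb.mul_left C).add (((summable_nat_add_iff p).2 hb).mul_left C)
  exact (summable_nat_add_iff p).1 (hbound.of_norm_bounded_eventually_nat hkey)

noncomputable def dyadicTerm (f : ℝ → ℝ) (e : ℕ) (t : ℝ) : ℝ := 2 ^ e * f ((2 ^ e)⁻¹ / t)

section DyadicTerm

variable {f : ℝ → ℝ}

theorem dyadicTerm_nonneg (hf : ∀ r > 0, 0 < f r) (e : ℕ) {t : ℝ} (ht : 0 < t) :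
    0 ≤ dyadicTerm f e t :=
  mul_nonneg (by positivity) (hf _ (by positivity)).le

theorem dyadicTerm_antitone (hf : MonotoneOn f (Set.Ioi 0)) (e : ℕ) {t t' : ℝ} (ht : 0 < t)
    (h : t ≤ t') : dyadicTerm f e t' ≤ dyadicTerm f e t := by
  have ht' : 0 < t' := ht.trans_le h
  refine mul_le_mul_of_nonneg_left (hf (by simp; positivity) (by simp; positivity) ?_)
    (by positivity)
  exact div_le_div_of_nonneg_left (by positivity) ht h

theorem dyadicTerm_add_le (hf : MonotoneOn f (Set.Ioi 0)) (e d : ℕ) {t t' : ℝ} (ht : 0 < t)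
    (ht' : 0 < t') (h : t' ≤ 2 ^ d * t) :
    dyadicTerm f (e + d) t ≤ 2 ^ d * dyadicTerm f e t' := by
  have harg : ((2 : ℝ) ^ (e + d))⁻¹ / t ≤ ((2 : ℝ) ^ e)⁻¹ / t' := by
    rw [div_le_div_iff₀ ht ht', pow_add, mul_inv, mul_assoc]
    exact mul_le_mul_of_nonneg_left ((inv_mul_le_iff₀ (by positivity)).2 h) (by positivity)
  calc dyadicTerm f (e + d) t ≤ 2 ^ (e + d) * f (((2 : ℝ) ^ e)⁻¹ / t') :=
        mul_le_mul_of_nonneg_left (hf (by simp; positivity) (by simp; positivity) harg)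
          (by positivity)
    _ = 2 ^ d * dyadicTerm f e t' := by rw [dyadicTerm, pow_add]; ring

end DyadicTerm

theorem Monotone.apply_two_rpow_le_mul {Ψ : ℝ → ℝ} (hΨ : Monotone Ψ) {c : ℝ}
    (hc : ∀ Q > (1 : ℝ), Ψ (Q ^ (2 : ℝ)) ≤ c * Ψ Q) {y z : ℝ} (hy : 0 < y) (hz : z ≤ 2 * y) :
    Ψ (2 ^ z) ≤ c * Ψ (2 ^ y) := by
  calc Ψ (2 ^ z) ≤ Ψ ((2 ^ y) ^ (2 : ℝ)) := by
        rw [← Real.rpow_mul zero_le_two, mul_comm]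
        exact hΨ (Real.rpow_le_rpow_of_exponent_le one_le_two hz)
    _ ≤ c * Ψ (2 ^ y) := hc _ (Real.one_lt_rpow one_lt_two hy)

theorem dyadicTerm_shift_le {Ψ f : ℝ → ℝ} (hΨ : Monotone Ψ) (hΨpos : ∀ t, 0 < Ψ t) {c : ℝ}
    (hc : ∀ Q > (1 : ℝ), Ψ (Q ^ (2 : ℝ)) ≤ c * Ψ Q) {m : ℕ} (hm : c < 2 ^ m)
    (hf : MonotoneOn f (Set.Ioi 0)) (p q : ℕ) (hpq : m ≤ 2 * p + q) (k j : ℕ) :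
    dyadicTerm f (2 * (k + p + 1) + (j + q))
        (Ψ (2 ^ ((((k + p : ℕ) : ℝ) + 1) + ((j + q : ℕ) : ℝ) / 2))) ≤
      2 ^ (2 * p + q) * dyadicTerm f (2 * (k + 1) + j) (Ψ (2 ^ (k + 1 + j))) := by
  set y : ℝ := (((k + p : ℕ) : ℝ) + 1) + ((j + q : ℕ) : ℝ) / 2
  have hy : 0 < y := by positivity
  have hΨy : Ψ (2 ^ (k + 1 + j)) ≤ 2 ^ (2 * p + q) * Ψ (2 ^ y) := by
    calc Ψ (2 ^ (k + 1 + j)) = Ψ (2 ^ ((k + 1 + j : ℕ) : ℝ)) := by rw [Real.rpow_natCast]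
      _ ≤ c * Ψ (2 ^ y) := hΨ.apply_two_rpow_le_mul hc hy <| by
          simp only [y]; push_cast
          linarith [k.cast_nonneg (α := ℝ), p.cast_nonneg (α := ℝ), q.cast_nonneg (α := ℝ)]
      _ ≤ 2 ^ (2 * p + q) * Ψ (2 ^ y) := by
          gcongr
          · exact (hΨpos _).le
          · exact hm.le.trans (pow_le_pow_right₀ one_le_two hpq)
  rw [show 2 * (k + p + 1) + (j + q) = 2 * (k + 1) + j + (2 * p + q) by ring]
  exact dyadicTerm_add_le hf _ _ (hΨpos _) (hΨpos _) hΨy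

theorem series_substitution_equivalence_general (Ψ : ℝ → ℝ) (hΨmono : Monotone Ψ)
    (hΨpos : ∀ t : ℝ, 0 < Ψ t)
    (hΨgrowth : ∀ x > (0 : ℝ), ∃ c₁ > (0 : ℝ), ∃ c₂ > (0 : ℝ), ∀ Q > (1 : ℝ),
      c₁ * Ψ Q ≤ Ψ (Q ^ x) ∧ Ψ (Q ^ x) ≤ c₂ * Ψ Q)
    (f : ℝ → ℝ) (hmono : MonotoneOn f (Set.Ioi 0))
    (hpos : ∀ r > (0 : ℝ), 0 < f r) :
    (Summable fun k : ℕ =>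
        ∑ j ∈ Finset.Ico 1 ⌈Real.logb 2 (Ψ ((2 : ℝ) ^ (k + 1)))⌉₊,
          (2 : ℝ) ^ (2 * (k + 1) + j) *
            f (((2 : ℝ) ^ (2 * (k + 1) + j))⁻¹ /
              Ψ ((2 : ℝ) ^ (((k : ℝ) + 1) + (j : ℝ) / 2)))) ↔
      (Summable fun k : ℕ =>
        ∑ j ∈ Finset.Ico 1 ⌈Real.logb 2 (Ψ ((2 : ℝ) ^ (k + 1)))⌉₊,
          (2 : ℝ) ^ (2 * (k + 1) + j) *
            f (((2 : ℝ) ^ (2 * (k + 1) + j))⁻¹ / Ψ ((2 : ℝ) ^ (k + 1 + j)))) := by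
  obtain ⟨_, -, c, -, hc⟩ := hΨgrowth 2 two_pos
  obtain ⟨m, hm⟩ := pow_unbounded_of_one_lt c one_lt_two
  have hN : Monotone fun k : ℕ => ⌈Real.logb 2 (Ψ ((2 : ℝ) ^ (k + 1)))⌉₊ := fun k l hkl =>
    Nat.ceil_mono <| Real.logb_le_logb_of_le one_lt_two (hΨpos _) <|
      hΨmono (pow_le_pow_right₀ one_le_two (by omega))
  have hshift := dyadicTerm_shift_le hΨmono hΨpos (fun Q hQ => (hc Q hQ).2) hm hmono
  constructor
  · refine fun h => h.of_nonneg_of_le (fun k => sum_nonneg fun j _ => ?_)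
      (fun k => sum_le_sum fun j _ => ?_)
    · exact dyadicTerm_nonneg hpos _ (hΨpos _)
    · have hexp : (k : ℝ) + 1 + j / 2 ≤ ((k + 1 + j : ℕ) : ℝ) := by
        push_cast; linarith [j.cast_nonneg (α := ℝ)]
      refine dyadicTerm_antitone hmono _ (hΨpos _) (hΨmono ?_)
      rw [← Real.rpow_natCast]
      exact Real.rpow_le_rpow_of_exponent_le one_le_two hexp
  · refine summable_sum_Ico_of_shift_le hN (p := m) (q := 2 * m) (C := 2 ^ (2 * m))
      (fun k j => dyadicTerm_nonneg hpos _ (hΨpos _)) (fun k j => ?_) (fun k j => ?_)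
    · exact hshift m 0 (by omega) k j
    · simpa only [dyadicTerm, add_zero, mul_zero, zero_add] using hshift 0 (2 * m) (by omega) k j

/-- If `Ψ` is non-decreasing, positive, and satisfies `Ψ(Q^x) ≍ Ψ(Q)` for all `x > 0`
(with implied constants depending only on `x`), then for a dimension function `f` the
series `∑_{k≥1} ∑_{1≤j<log₂Ψ(2^k)} 2^(2k+j) f(2^(−(2k+j))/Ψ(2^(k+j/2)))` converges if and
only if `∑_{k≥1} ∑_{1≤j<log₂Ψ(2^k)} 2^(2k+j) f(2^(−(2k+j))/Ψ(2^(k+j)))` converges. -/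
theorem series_substitution_equivalence (Ψ : ℝ → ℝ) (hΨmono : Monotone Ψ)
    (hΨpos : ∀ t : ℝ, 0 < Ψ t)
    (hΨgrowth : ∀ x > (0 : ℝ), ∃ c₁ > (0 : ℝ), ∃ c₂ > (0 : ℝ), ∀ Q > (1 : ℝ),
      c₁ * Ψ Q ≤ Ψ (Q ^ x) ∧ Ψ (Q ^ x) ≤ c₂ * Ψ Q)
    (f : ℝ → ℝ) (hmono : MonotoneOn f (Set.Ioi 0)) (hcont : ContinuousOn f (Set.Ioi 0))
    (hpos : ∀ r > (0 : ℝ), 0 < f r)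
    (h0 : Filter.Tendsto f (nhdsWithin 0 (Set.Ioi 0)) (nhds 0)) :
    (Summable fun k : ℕ =>
        ∑ j ∈ Finset.Ico 1 ⌈Real.logb 2 (Ψ ((2 : ℝ) ^ (k + 1)))⌉₊,
          (2 : ℝ) ^ (2 * (k + 1) + j) *
            f (((2 : ℝ) ^ (2 * (k + 1) + j))⁻¹ /
              Ψ ((2 : ℝ) ^ (((k : ℝ) + 1) + (j : ℝ) / 2)))) ↔
      (Summable fun k : ℕ =>
        ∑ j ∈ Finset.Ico 1 ⌈Real.logb 2 (Ψ ((2 : ℝ) ^ (k + 1)))⌉₊,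
          (2 : ℝ) ^ (2 * (k + 1) + j) *
            f (((2 : ℝ) ^ (2 * (k + 1) + j))⁻¹ / Ψ ((2 : ℝ) ^ (k + 1 + j)))) :=
  series_substitution_equivalence_general Ψ hΨmono hΨpos hΨgrowth f hmono hpos
end
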